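/- arXiv:1601.05187 — 12 statements merged into one kernel-verified Lean document; each statement's English description precedes it below -/
import Mathlib

section
/- Let f = {f_u}_{u∈D} be a self-aware family of inductively defined trace functions (f_u(ε)=ε and f_u(αa)=(f_u(α), g(α,a,u)) if C(α,a,u) holds, else f_u(αa)=f_u(α)). Then a system M is f-secure (f_u(α)=f_u(β) implies obs_u(s0·α)=obs_u(s0·β)) if and only if M is f-view-secure (f_u(α)=f_u(β) implies view_u(α)=view_u(β)). -/
open Classical

/-- Binary trees over actions, values of the `ta` purge functions. -/
inductive TATree (A : Type) : Type where
  | eps : TATree A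
  | node : TATree A → TATree A → A → TATree A

/-- Run a deterministic system along a trace (newest action at the head of the list). -/
def runL {S A : Type} (step : S → A → S) (s0 : S) : List A → S
  | [] => s0
  | a :: α => step (runL step s0 α) a

/-- The permissive purge function `ta^◇` for a dynamic policy `P`. -/
noncomputable def taD {D A : Type} (dm : A → D) (P : List A → D → D → Prop) :
    List A → D → TATree A
  | [], _ => TATree.eps
  | a :: α, u =>
    if P α (dm a) u then TATree.node (taD dm P α u) (taD dm P α (dm a)) a
    else taD dm P α u

/-- The unwinding relations: smallest family of equivalence relations on traces
satisfying WSC and DLR with respect to the dynamic policy `P`. -/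
inductive Unw {D A : Type} (dm : A → D) (P : List A → D → D → Prop) :
    D → List A → List A → Prop where
  | refl (u : D) (α : List A) : Unw dm P u α α
  | symm {u : D} {α β : List A} : Unw dm P u α β → Unw dm P u β α
  | trans {u : D} {α β γ : List A} : Unw dm P u α β → Unw dm P u β γ → Unw dm P u α γ
  | dlr (u : D) (α : List A) (a : A) : ¬ P α (dm a) u → Unw dm P u (a :: α) α
  | wsc (u : D) {α β : List A} (a : A) :
      Unw dm P u α β → Unw dm P (dm a) α β → Unw dm P u (a :: α) (a :: β)

/-- The prohibitive purge function `ta^□`, whose condition is distributed knowledge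
of the policy edge, interpreted over the Kripke structure given by the unwinding relations. -/
noncomputable def taB {D A : Type} (dm : A → D) (P : List A → D → D → Prop) :
    List A → D → TATree A
  | [], _ => TATree.eps
  | a :: α, u =>
    if (∀ β, Unw dm P u α β → Unw dm P (dm a) α β → P β (dm a) u) then
      TATree.node (taB dm P α u) (taB dm P α (dm a)) a
    else taB dm P α u

/-- Absorptive concatenation of an observation onto a view (newest element first). -/
noncomputable def absorb {A O : Type} (x : O) : List (A ⊕ O) → List (A ⊕ O)
  | [] => [Sum.inr x]
  | y :: t => if y = Sum.inr x then y :: t else Sum.inr x :: y :: t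

/-- The perfect-recall view of a domain `u` of a trace. -/
noncomputable def viewL {D A O S : Type} (dm : A → D) (step : S → A → S) (s0 : S)
    (obs : D → S → O) (u : D) : List A → List (A ⊕ O)
  | [] => [Sum.inr (obs u s0)]
  | a :: α =>
    if dm a = u then
      Sum.inr (obs u (runL step s0 (a :: α))) :: Sum.inl a :: viewL dm step s0 obs u α
    else absorb (obs u (runL step s0 (a :: α))) (viewL dm step s0 obs u α)

/-- An inductively defined family of trace functions given by condition `C` and record `g`;
pairing `(f_u α, g(α,a,u))` is represented by list cons. -/
noncomputable def fFam {D A G : Type} (C : List A → A → D → Prop) (g : List A → A → D → G) :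
    List A → D → List G
  | [], _ => []
  | a :: α, u => if C α a u then g α a u :: fFam C g α u else fFam C g α u

/-! The view of `u` always ends in `u`'s current observation, so view-security implies security.
Conversely, by self-awareness an action not recorded by `f_u` belongs to another domain, so it
can only append to the view an observation that security shows to be unchanged, which absorption
swallows; recorded actions are determined by their record, so two traces with the same `f_u`
build their views in lockstep. -/

section View

variable {D A O S : Type} (dm : A → D) (step : S → A → S) (s0 : S) (obs : D → S → O)

lemma head?_absorb (x : O) (l : List (A ⊕ O)) :
    (absorb x l).head? = some (Sum.inr x) := by
  cases l with
  | nil => rfl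
  | cons y t => by_cases h : y = Sum.inr x <;> simp [absorb, h]

lemma absorb_eq_self_of_head? {x : O} {l : List (A ⊕ O)}
    (h : l.head? = some (Sum.inr x)) : absorb x l = l := by
  cases l with
  | nil => cases h
  | cons y t => simp_all [absorb]

lemma head?_viewL (u : D) (α : List A) :
    (viewL dm step s0 obs u α).head? = some (Sum.inr (obs u (runL step s0 α))) := by
  cases α with
  | nil => rfl
  | cons a α => unfold viewL; split_ifs <;> simp [head?_absorb]

lemma obs_eq_of_viewL_eq {u : D} {α β : List A}
    (h : viewL dm step s0 obs u α = viewL dm step s0 obs u β) :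
    obs u (runL step s0 α) = obs u (runL step s0 β) := by
  have hhead := congrArg List.head? h
  rwa [head?_viewL, head?_viewL, Option.some.injEq, Sum.inr.injEq] at hhead

lemma viewL_cons_of_obs_eq {u : D} {a : A} {α : List A} (hd : dm a ≠ u)
    (ho : obs u (runL step s0 (a :: α)) = obs u (runL step s0 α)) :
    viewL dm step s0 obs u (a :: α) = viewL dm step s0 obs u α := by
  rw [viewL, if_neg hd, ho]
  exact absorb_eq_self_of_head? (head?_viewL dm step s0 obs u α)

lemma viewL_cons_congr {u : D} (a : A) {α β : List A}
    (hv : viewL dm step s0 obs u α = viewL dm step s0 obs u β)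
    (ho : obs u (runL step s0 (a :: α)) = obs u (runL step s0 (a :: β))) :
    viewL dm step s0 obs u (a :: α) = viewL dm step s0 obs u (a :: β) := by
  simp only [viewL, hv, ho]

end View

section Family

variable {D A G : Type} {C : List A → A → D → Prop} {g : List A → A → D → G}

lemma fFam_cons_of_pos {α : List A} {a : A} {u : D} (h : C α a u) :
    fFam C g (a :: α) u = g α a u :: fFam C g α u := by
  simp [fFam, h]

lemma fFam_cons_of_neg {α : List A} {a : A} {u : D} (h : ¬ C α a u) :
    fFam C g (a :: α) u = fFam C g α u := by
  simp [fFam, h]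

end Family

section Security

variable {D A O G S : Type} {dm : A → D} {step : S → A → S} {s0 : S} {obs : D → S → O}
  {C : List A → A → D → Prop} {g : List A → A → D → G}
  (hsa1 : ∀ α a u, dm a = u → C α a u)
  (hsec : ∀ u (α β : List A), fFam C g α u = fFam C g β u →
    obs u (runL step s0 α) = obs u (runL step s0 β))
include hsa1 hsec

lemma viewL_cons_of_not_recorded {u : D} {a : A} {α : List A} (hC : ¬ C α a u) :
    viewL dm step s0 obs u (a :: α) = viewL dm step s0 obs u α :=
  viewL_cons_of_obs_eq dm step s0 obs (fun hd => hC (hsa1 α a u hd))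
    (hsec u _ _ (fFam_cons_of_neg hC))

lemma viewL_eq_of_fFam_eq (hsa2 : ∀ α β a b u, g α a u = g β b u → a = b) (u : D) :
    ∀ α β : List A, fFam C g α u = fFam C g β u →
      viewL dm step s0 obs u α = viewL dm step s0 obs u β
  | [], [], _ => rfl
  | a :: α, β, hf => by
    by_cases hCa : C α a u
    swap
    · rw [viewL_cons_of_not_recorded hsa1 hsec hCa]
      exact viewL_eq_of_fFam_eq hsa2 u α β (by rwa [fFam_cons_of_neg hCa] at hf)
    rw [fFam_cons_of_pos hCa] at hf
    cases β with
    | nil => cases hf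
    | cons b β =>
      by_cases hCb : C β b u
      swap
      · rw [viewL_cons_of_not_recorded hsa1 hsec hCb]
        exact viewL_eq_of_fFam_eq hsa2 u (a :: α) β
          (by rwa [fFam_cons_of_pos hCa, ← fFam_cons_of_neg hCb])
      rw [fFam_cons_of_pos hCb, List.cons.injEq] at hf
      obtain rfl := hsa2 α β a b u hf.1
      refine viewL_cons_congr dm step s0 obs a (viewL_eq_of_fFam_eq hsa2 u α β hf.2) ?_
      exact hsec u _ _ (by rw [fFam_cons_of_pos hCa, fFam_cons_of_pos hCb, hf.1, hf.2])
  | [], b :: β, hf => by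
    by_cases hCb : C β b u
    · rw [fFam_cons_of_pos hCb] at hf
      cases hf
    · rw [viewL_cons_of_not_recorded hsa1 hsec hCb]
      exact viewL_eq_of_fFam_eq hsa2 u [] β (by rwa [fFam_cons_of_neg hCb] at hf)
termination_by α β => α.length + β.length

end Security

/-- for a self-aware family `f`, a system is `f`-secure iff it is
`f`-view-secure. -/
theorem statement_0 {D A O G S : Type} (dm : A → D) (step : S → A → S) (s0 : S)
    (obs : D → S → O) (C : List A → A → D → Prop) (g : List A → A → D → G)
    (hsa1 : ∀ α a u, dm a = u → C α a u)
    (hsa2 : ∀ α β a b u, g α a u = g β b u → a = b) :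
    (∀ u (α β : List A), fFam C g α u = fFam C g β u →
        obs u (runL step s0 α) = obs u (runL step s0 β)) ↔
    (∀ u (α β : List A), fFam C g α u = fFam C g β u →
        viewL dm step s0 obs u α = viewL dm step s0 obs u β) := by
  exact ⟨fun hsec u => viewL_eq_of_fFam_eq hsa1 hsec hsa2 u,
    fun hview u α β hf => obs_eq_of_viewL_eq dm step s0 obs (hview u α β hf)⟩
end

section
/- Let {∼_u}_{u∈D} be equivalence relations on A* satisfying WSC (if α∼_u β and α∼_{dom(a)} β then αa ∼_u βa). Then the relations satisfy DLR (if α ⊨ dom(a) ↛ u then αa ∼_u α) if and only if they satisfy DLR' (if there exists β with α∼_u β, α∼_{dom(a)} β, and β ⊨ dom(a) ↛ u, then αa ∼_u α). -/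
open Classical

/-- in the presence of WSC, the conditions DLR and DLR' are equivalent. -/
theorem statement_1 {D A : Type} (dm : A → D) (P : List A → D → D → Prop)
    (R : D → List A → List A → Prop)
    (hequiv : ∀ u, Equivalence (R u))
    (hwsc : ∀ u (α β : List A) (a : A), R u α β → R (dm a) α β → R u (a :: α) (a :: β)) :
    (∀ u (α : List A) (a : A), ¬ P α (dm a) u → R u (a :: α) α) ↔
    (∀ u (α : List A) (a : A),
        (∃ β, R u α β ∧ R (dm a) α β ∧ ¬ P β (dm a) u) → R u (a :: α) α) := by
  constructor
  · rintro dlr u α a ⟨β, hαβ_u, hαβ_dom, hβ⟩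
    have hαaβa : R u (a :: α) (a :: β) := hwsc u α β a hαβ_u hαβ_dom
    have hβaβ : R u (a :: β) β := dlr u β a hβ
    exact (hequiv u).trans hαaβa ((hequiv u).trans hβaβ ((hequiv u).symm hαβ_u))
  · intro dlr' u α a hα
    exact dlr' u α a ⟨α, (hequiv u).refl α, (hequiv (dm a)).refl α, hα⟩
end

section
/- If dynamic policy ↣ is more restrictive than ↣' (i.e., ↣ ≤ ↣': for all α, u, v, α ⊨ u ↣ v implies α ⊨ u ↣' v), and {∼ᵘⁿʷ_u} and {≈ᵘⁿʷ_u} are the unwinding relations (smallest equivalence relations satisfying WSC and DLR) for ↣ and ↣' respectively, then ≈ᵘⁿʷ_u ⊆ ∼ᵘⁿʷ_u for all u ∈ D. -/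
open Classical

theorem Unw.of_policy_le {D A : Type} {dm : A → D} {P P' : List A → D → D → Prop}
    (hle : ∀ α u v, P α u v → P' α u v) {u : D} {α β : List A}
    (h : Unw dm P' u α β) : Unw dm P u α β := by
  induction h with
  | refl u α => exact .refl u α
  | symm _ ih => exact ih.symm
  | trans _ _ ih₁ ih₂ => exact ih₁.trans ih₂
  | dlr u α a hno => exact .dlr u α a (hno ∘ hle _ _ _)
  | wsc u a _ _ ih₁ ih₂ => exact .wsc u a ih₁ ih₂

/-- if `P ≤ P'` then the unwinding relations of `P'` are contained in
those of `P`. -/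
theorem statement_2 {D A : Type} (dm : A → D) (P P' : List A → D → D → Prop)
    (hle : ∀ α u v, P α u v → P' α u v) :
    ∀ u (α β : List A), Unw dm P' u α β → Unw dm P u α β :=
  fun _ _ _ => Unw.of_policy_le hle
end

section
/- For every domain u ∈ D, the unwinding relation ∼ᵘⁿʷ_u equals the relation ∼^□_u defined by α ∼^□_u β iff ta^□_u(α) = ta^□_u(β), where ta^□ is the prohibitive purge function interpreted over the Kripke structure with equivalence relations {∼ᵘⁿʷ_u}. -/
open Classical

/-! Soundness: the condition tested by `taB` at `a :: α` depends only on the `∼_u`- and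
`∼_{dm a}`-classes of `α`, so every generating rule of `Unw` preserves `taB _ u`.
Completeness: if the condition fails at `a :: α`, some `γ` with `α ∼_u γ` and `α ∼_{dm a} γ`
lacks the edge, and WSC followed by DLR gives `a :: α ∼_u a :: γ ∼_u γ ∼_u α`. So actions
dropped by the purge can be dropped up to `∼_u`, and actions it keeps are matched by WSC. -/

/-- `α ⊨ D_{dm a, u} (dm a ↣ u)` in the Kripke structure of the unwinding relations. -/
def DistKnowsEdge {D A : Type} (dm : A → D) (P : List A → D → D → Prop) (u : D) (α : List A)
    (a : A) : Prop :=
  ∀ β, Unw dm P u α β → Unw dm P (dm a) α β → P β (dm a) u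

section

variable {D A : Type} {dm : A → D} {P : List A → D → D → Prop}

theorem distKnowsEdge_congr {u : D} {α β : List A} {a : A} (hu : Unw dm P u α β)
    (ha : Unw dm P (dm a) α β) : DistKnowsEdge dm P u α a ↔ DistKnowsEdge dm P u β a :=
  ⟨fun h γ hu' ha' => h γ (hu.trans hu') (ha.trans ha'),
    fun h γ hu' ha' => h γ (hu.symm.trans hu') (ha.symm.trans ha')⟩

theorem unw_cons_of_not_distKnowsEdge {u : D} {α : List A} {a : A}
    (h : ¬ DistKnowsEdge dm P u α a) : Unw dm P u (a :: α) α := by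
  obtain ⟨γ, hu, ha, hP⟩ : ∃ γ, Unw dm P u α γ ∧ Unw dm P (dm a) α γ ∧ ¬ P γ (dm a) u := by
    simpa [DistKnowsEdge] using h
  exact ((Unw.wsc u a hu ha).trans (Unw.dlr u γ a hP)).trans hu.symm

theorem taB_cons_of_distKnowsEdge {u : D} {α : List A} {a : A}
    (h : DistKnowsEdge dm P u α a) :
    taB dm P (a :: α) u = .node (taB dm P α u) (taB dm P α (dm a)) a := by
  rw [taB]
  exact if_pos h

theorem taB_cons_of_not_distKnowsEdge {u : D} {α : List A} {a : A}
    (h : ¬ DistKnowsEdge dm P u α a) : taB dm P (a :: α) u = taB dm P α u := by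
  rw [taB]
  exact if_neg h

theorem taB_eq_of_unw {u : D} {α β : List A} (h : Unw dm P u α β) :
    taB dm P α u = taB dm P β u := by
  induction h with
  | refl => rfl
  | symm _ ih => exact ih.symm
  | trans _ _ ih₁ ih₂ => exact ih₁.trans ih₂
  | dlr u α a hP =>
    exact taB_cons_of_not_distKnowsEdge fun h => hP (h α (.refl _ _) (.refl _ _))
  | @wsc u α β a hu ha ihu iha =>
    by_cases hk : DistKnowsEdge dm P u α a
    · rw [taB_cons_of_distKnowsEdge hk,
        taB_cons_of_distKnowsEdge ((distKnowsEdge_congr hu ha).mp hk), ihu, iha]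
    · rw [taB_cons_of_not_distKnowsEdge hk,
        taB_cons_of_not_distKnowsEdge (mt (distKnowsEdge_congr hu ha).mpr hk), ihu]

/-- The most recent action of `β` (its head) is kept by `taB _ u`. -/
def HeadKept (dm : A → D) (P : List A → D → D → Prop) (u : D) : List A → Prop
  | [] => True
  | b :: β => DistKnowsEdge dm P u β b

theorem unw_of_taB_eq_of_headKept {u : D} {α : List A}
    (h : ∀ β, HeadKept dm P u β → taB dm P α u = taB dm P β u → Unw dm P u α β) :
    ∀ β, taB dm P α u = taB dm P β u → Unw dm P u α β
  | [] => h [] trivial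
  | b :: β => by
    by_cases hk : DistKnowsEdge dm P u β b
    · exact h (b :: β) hk
    · intro hαβ
      rw [taB_cons_of_not_distKnowsEdge hk] at hαβ
      exact (unw_of_taB_eq_of_headKept h β hαβ).trans (unw_cons_of_not_distKnowsEdge hk).symm

theorem unw_of_taB_eq {α : List A} :
    ∀ {u : D} {β : List A}, taB dm P α u = taB dm P β u → Unw dm P u α β := by
  induction α with
  | nil =>
    intro u β
    refine unw_of_taB_eq_of_headKept (fun β hβ hαβ => ?_) β
    cases β with
    | nil => exact .refl _ _
    | cons b β => rw [taB_cons_of_distKnowsEdge hβ] at hαβ; cases hαβ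
  | cons a α ih =>
    intro u β
    by_cases hk : DistKnowsEdge dm P u α a
    · refine unw_of_taB_eq_of_headKept (fun β hβ hαβ => ?_) β
      cases β with
      | nil => rw [taB_cons_of_distKnowsEdge hk] at hαβ; cases hαβ
      | cons b β =>
        rw [taB_cons_of_distKnowsEdge hk, taB_cons_of_distKnowsEdge hβ] at hαβ
        obtain ⟨hu, ha, rfl⟩ := TATree.node.inj hαβ
        exact .wsc u a (ih hu) (ih ha)
    · intro hαβ
      rw [taB_cons_of_not_distKnowsEdge hk] at hαβ
      exact (unw_cons_of_not_distKnowsEdge hk).trans (ih hαβ)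

end

theorem statement_3_general {D A : Type} (dm : A → D) (P : List A → D → D → Prop) :
    ∀ u (α β : List A), Unw dm P u α β ↔ taB dm P α u = taB dm P β u :=
  fun _ _ _ => ⟨taB_eq_of_unw, unw_of_taB_eq⟩

/-- the unwinding relation `∼ᵘⁿʷ_u` coincides with the kernel of `ta^□_u`. -/
theorem statement_3 {D A : Type} (dm : A → D) (P : List A → D → D → Prop)
    (hrefl : ∀ α u, P α u u) :
    ∀ u (α β : List A), Unw dm P u α β ↔ taB dm P α u = taB dm P β u :=
  statement_3_general dm P
end

section
/- For all traces α, β ∈ A* and all domains u ∈ D: if ta^◇_u(α) = ta^◇_u(β) then α ∼ᵘⁿʷ_u β. Consequently, ta^□-security implies ta^◇-security. -/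
open Classical

/-!
Induct on the first trace, and inside on the second. A head action that is not a policy edge for
`u` is invisible to `taD · u` and is removed by DLR; once both heads are edges, equal `taD` values
are equal `node`s, so the tails have equal `taD` values for `u` and for the domain of the (common)
head, and WSC reassembles the two unwinding facts.
-/

section Purge

variable {D A : Type} {dm : A → D} {P : List A → D → D → Prop} {u : D} {a : A} {α β : List A}

theorem taD_cons_of_edge (h : P α (dm a) u) :
    taD dm P (a :: α) u = TATree.node (taD dm P α u) (taD dm P α (dm a)) a := by
  simp only [taD, if_pos h]

theorem taD_cons_of_not_edge (h : ¬ P α (dm a) u) : taD dm P (a :: α) u = taD dm P α u := by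
  simp only [taD, if_neg h]

theorem Unw.cons_left_of_not_edge (h : ¬ P α (dm a) u) (hαβ : Unw dm P u α β) :
    Unw dm P u (a :: α) β :=
  (Unw.dlr u α a h).trans hαβ

theorem Unw.cons_right_of_not_edge (h : ¬ P β (dm a) u) (hαβ : Unw dm P u α β) :
    Unw dm P u α (a :: β) :=
  hαβ.trans (Unw.dlr u β a h).symm

theorem Unw.of_taD_eq (heq : taD dm P α u = taD dm P β u) : Unw dm P u α β := by
  induction α generalizing u β with
  | nil =>
    induction β with
    | nil => exact Unw.refl u []
    | cons b β ihβ =>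
      by_cases hb : P β (dm b) u
      · rw [taD_cons_of_edge hb] at heq
        simp [taD] at heq
      · rw [taD_cons_of_not_edge hb] at heq
        exact (ihβ heq).cons_right_of_not_edge hb
  | cons a α ihα =>
    by_cases ha : P α (dm a) u
    · rw [taD_cons_of_edge ha] at heq
      induction β with
      | nil => simp [taD] at heq
      | cons b β ihβ =>
        by_cases hb : P β (dm b) u
        · rw [taD_cons_of_edge hb] at heq
          obtain ⟨hu, hdm, rfl⟩ := TATree.node.inj heq
          exact Unw.wsc u a (ihα hu) (ihα hdm)
        · rw [taD_cons_of_not_edge hb] at heq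
          exact (ihβ heq).cons_right_of_not_edge hb
    · rw [taD_cons_of_not_edge ha] at heq
      exact (ihα heq).cons_left_of_not_edge ha

end Purge

theorem statement_4_general {D A : Type} (dm : A → D) (P : List A → D → D → Prop) :
    (∀ u (α β : List A), taD dm P α u = taD dm P β u → Unw dm P u α β) ∧
    (∀ (S O : Type) (step : S → A → S) (s0 : S) (obs : D → S → O),
      (∀ u (α β : List A), Unw dm P u α β →
          obs u (runL step s0 α) = obs u (runL step s0 β)) →
      ∀ u (α β : List A), taD dm P α u = taD dm P β u →
          obs u (runL step s0 α) = obs u (runL step s0 β)) :=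
  ⟨fun _ _ _ => Unw.of_taD_eq,
    fun _ _ _ _ _ hsec u α β heq => hsec u α β (Unw.of_taD_eq heq)⟩

/-- equal `ta^◇` values imply unwinding equivalence; consequently
`ta^□`-security implies `ta^◇`-security. -/
theorem statement_4 {D A : Type} (dm : A → D) (P : List A → D → D → Prop)
    (hrefl : ∀ α u, P α u u) :
    (∀ u (α β : List A), taD dm P α u = taD dm P β u → Unw dm P u α β) ∧
    (∀ (S O : Type) (step : S → A → S) (s0 : S) (obs : D → S → O),
      (∀ u (α β : List A), Unw dm P u α β →
          obs u (runL step s0 α) = obs u (runL step s0 β)) →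
      ∀ u (α β : List A), taD dm P α u = taD dm P β u →
          obs u (runL step s0 α) = obs u (runL step s0 β)) :=
  statement_4_general dm P
end

section
/- If a dynamic policy ↣ is local with respect to the relations {∼^◇_u}_{u∈D} (where α ∼^◇_u β iff ta^◇_u(α) = ta^◇_u(β)), then ∼^◇_u = ∼ᵘⁿʷ_u for all u ∈ D. -/
open Classical

/-! Soundness: the kernels of `ta^◇` are equivalence relations; they satisfy DLR because
`ta^◇_u` erases an action that may not interfere with `u`, and WSC because locality transfers
the edge `dom(a) ↣ u` from `α` to `β`. Completeness: by induction on the traces, erased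
actions are removed with DLR, and matching nodes of the trees are rebuilt with WSC. -/

section

variable {D A : Type} (dm : A → D) (P : List A → D → D → Prop)

@[simp]
theorem taD_nil (u : D) : taD dm P [] u = TATree.eps := by
  simp [taD]

theorem taD_cons_of_pos {a : A} {α : List A} {u : D} (h : P α (dm a) u) :
    taD dm P (a :: α) u = TATree.node (taD dm P α u) (taD dm P α (dm a)) a := by
  simp [taD, h]

theorem taD_cons_of_neg {a : A} {α : List A} {u : D} (h : ¬ P α (dm a) u) :
    taD dm P (a :: α) u = taD dm P α u := by
  simp [taD, h]

theorem taD_eq_of_unw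
    (hloc : ∀ u v (α β : List A), taD dm P α u = taD dm P β u →
        taD dm P α v = taD dm P β v → (P α u v ↔ P β u v))
    {u : D} {α β : List A} (h : Unw dm P u α β) : taD dm P α u = taD dm P β u := by
  induction h with
  | refl => rfl
  | symm _ ih => exact ih.symm
  | trans _ _ ih₁ ih₂ => exact ih₁.trans ih₂
  | dlr u α a hP => exact taD_cons_of_neg dm P hP
  | @wsc u α β a _ _ ihu iha =>
    have hedge := hloc (dm a) u α β iha ihu
    by_cases hP : P α (dm a) u
    · rw [taD_cons_of_pos dm P hP, taD_cons_of_pos dm P (hedge.mp hP), ihu, iha]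
    · rw [taD_cons_of_neg dm P hP, taD_cons_of_neg dm P (mt hedge.mpr hP), ihu]

theorem unw_nil_of_taD_eq_eps {u : D} {β : List A} (h : taD dm P β u = TATree.eps) :
    Unw dm P u β [] := by
  induction β with
  | nil => exact Unw.refl u []
  | cons b β ih =>
    by_cases hP : P β (dm b) u
    · simp [taD_cons_of_pos dm P hP] at h
    · rw [taD_cons_of_neg dm P hP] at h
      exact (Unw.dlr u β b hP).trans (ih h)

theorem unw_of_taD_eq {u : D} {α β : List A} (h : taD dm P α u = taD dm P β u) :
    Unw dm P u α β := by
  induction α generalizing u β with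
  | nil => exact (unw_nil_of_taD_eq_eps dm P (by rw [← h, taD_nil])).symm
  | cons a α ih =>
    by_cases hP : P α (dm a) u
    · rw [taD_cons_of_pos dm P hP] at h
      induction β with
      | nil => simp at h
      | cons b β ihβ =>
        by_cases hQ : P β (dm b) u
        · rw [taD_cons_of_pos dm P hQ, TATree.node.injEq] at h
          obtain ⟨hu, hdm, rfl⟩ := h
          exact Unw.wsc u a (ih hu) (ih hdm)
        · rw [taD_cons_of_neg dm P hQ] at h
          exact (ihβ h).trans (Unw.dlr u β b hQ).symm
    · rw [taD_cons_of_neg dm P hP] at h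
      exact (Unw.dlr u α a hP).trans (ih h)

end

theorem statement_5_general {D A : Type} (dm : A → D) (P : List A → D → D → Prop)
    (hloc : ∀ u v (α β : List A), taD dm P α u = taD dm P β u →
        taD dm P α v = taD dm P β v → (P α u v ↔ P β u v)) :
    ∀ u (α β : List A), taD dm P α u = taD dm P β u ↔ Unw dm P u α β :=
  fun _ _ _ => ⟨unw_of_taD_eq dm P, taD_eq_of_unw dm P hloc⟩

/-- if the policy is local with respect to the kernels of `ta^◇`, then
those kernels coincide with the unwinding relations. -/
theorem statement_5 {D A : Type} (dm : A → D) (P : List A → D → D → Prop)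
    (hrefl : ∀ α u, P α u u)
    (hloc : ∀ u v (α β : List A), taD dm P α u = taD dm P β u →
        taD dm P α v = taD dm P β v → (P α u v ↔ P β u v)) :
    ∀ u (α β : List A), taD dm P α u = taD dm P β u ↔ Unw dm P u α β :=
  statement_5_general dm P hloc
end

section
/- If a dynamic policy ↣ is local, then for every system M, M is ta^◇-secure with respect to ↣ if and only if M is ta^□-secure with respect to ↣. -/
open Classical

/-!
Traces related by the unwinding relation of `u` have the same `ta^◇` value at `u`, so for a
local policy an edge `u ↣ v` holds in `α` iff it holds in every trace that neither `u` nor `v`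
can distinguish from `α`. Hence the conditions in the definitions of `ta^◇` and `ta^□` agree,
the two purge functions coincide, and so do the two security notions.
-/

def IsLocalPolicy {D A : Type} (dm : A → D) (P : List A → D → D → Prop) : Prop :=
  ∀ u v (α β : List A), taD dm P α u = taD dm P β u →
    taD dm P α v = taD dm P β v → (P α u v ↔ P β u v)

namespace IsLocalPolicy

variable {D A : Type} {dm : A → D} {P : List A → D → D → Prop}

theorem taD_eq_of_unw (hloc : IsLocalPolicy dm P) {u : D} {α β : List A}
    (h : Unw dm P u α β) : taD dm P α u = taD dm P β u := by
  induction h with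
  | refl => rfl
  | symm _ ih => exact ih.symm
  | trans _ _ ih₁ ih₂ => exact ih₁.trans ih₂
  | dlr u α a hn => simp [taD, hn]
  | @wsc u α β a _ _ ih ih_dm =>
    have hedge : P α (dm a) u ↔ P β (dm a) u := hloc (dm a) u α β ih_dm ih
    by_cases hp : P α (dm a) u
    · simp [taD, hp, hedge.mp hp, ih, ih_dm]
    · simp [taD, hp, mt hedge.mpr hp, ih]

theorem edge_iff_distributed (hloc : IsLocalPolicy dm P) (u v : D) (α : List A) :
    P α u v ↔ ∀ β, Unw dm P v α β → Unw dm P u α β → P β u v :=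
  ⟨fun hp β hv hu => (hloc u v α β (hloc.taD_eq_of_unw hu) (hloc.taD_eq_of_unw hv)).mp hp,
    fun h => h α (Unw.refl v α) (Unw.refl u α)⟩

theorem taD_eq_taB (hloc : IsLocalPolicy dm P) : taD dm P = taB dm P := by
  funext α u
  induction α generalizing u with
  | nil => rfl
  | cons a α ih =>
    rw [taD, taB, ← hloc.edge_iff_distributed, ih, ih]

end IsLocalPolicy

theorem statement_7_general {D A S O : Type} (dm : A → D) (P : List A → D → D → Prop)
    (hloc : ∀ u v (α β : List A), taD dm P α u = taD dm P β u →
        taD dm P α v = taD dm P β v → (P α u v ↔ P β u v))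
    (step : S → A → S) (s0 : S) (obs : D → S → O) :
    (∀ u (α β : List A), taD dm P α u = taD dm P β u →
        obs u (runL step s0 α) = obs u (runL step s0 β)) ↔
    (∀ u (α β : List A), taB dm P α u = taB dm P β u →
        obs u (runL step s0 α) = obs u (runL step s0 β)) := by
  rw [IsLocalPolicy.taD_eq_taB hloc]

/-- for a local policy, `ta^◇`-security and `ta^□`-security coincide. -/
theorem statement_7 {D A S O : Type} (dm : A → D) (P : List A → D → D → Prop)
    (hrefl : ∀ α u, P α u u)
    (hloc : ∀ u v (α β : List A), taD dm P α u = taD dm P β u →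
        taD dm P α v = taD dm P β v → (P α u v ↔ P β u v))
    (step : S → A → S) (s0 : S) (obs : D → S → O) :
    (∀ u (α β : List A), taD dm P α u = taD dm P β u →
        obs u (runL step s0 α) = obs u (runL step s0 β)) ↔
    (∀ u (α β : List A), taB dm P α u = taB dm P β u →
        obs u (runL step s0 α) = obs u (runL step s0 β)) :=
  statement_7_general dm P hloc step s0 obs
end

section
/- Two dynamic policies ↣ and ↣' over a common signature are equivalent with respect to ta^◇-security (i.e., every system is ta^◇-secure for ↣ iff it is ta^◇-secure for ↣') if and only if ↣ and ↣' are identical up to inactive domains (they agree on all edges from domains u with dom⁻¹(u) ≠ ∅). -/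
open Classical

/-
If `↣` and `↣'` agree on every edge leaving an active domain, then `ta^◇` is literally the same
function for both, since it only ever inspects edges `dm a ↣ u`. Conversely, run the system whose
state is the trace itself and which lets `u` observe `ta^◇'(α, u)`: it is `ta^◇'`-secure, hence
`ta^◇`-secure. If some edge `dm a ↣' v` at `α` were missing from `↣`, the traces `a α` and `α`
would have the same `ta^◇` value for `v` but different `ta^◇'` values, since a tree is never
equal to one of its own subtrees.
-/

theorem TATree.node_ne_left {A : Type} (l r : TATree A) (a : A) : TATree.node l r a ≠ l := by
  intro h
  have := congrArg sizeOf h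
  simp only [TATree.node.sizeOf_spec] at this
  omega

def IsTaDSecure {D A S O : Type} (dm : A → D) (P : List A → D → D → Prop)
    (step : S → A → S) (s0 : S) (obs : D → S → O) : Prop :=
  ∀ u (α β : List A), taD dm P α u = taD dm P β u →
    obs u (runL step s0 α) = obs u (runL step s0 β)

def SecurityEquivalent {D A : Type} (dm : A → D) (P P' : List A → D → D → Prop) : Prop :=
  ∀ (S O : Type) (step : S → A → S) (s0 : S) (obs : D → S → O),
    IsTaDSecure dm P step s0 obs ↔ IsTaDSecure dm P' step s0 obs

theorem runL_cons_nil {A : Type} (α : List A) :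
    runL (fun s a => a :: s) ([] : List A) α = α := by
  induction α with
  | nil => rfl
  | cons a α ih => simp only [runL, ih]

section

variable {D A : Type} (dm : A → D)

theorem taD_eq_of_active_edges_iff {P P' : List A → D → D → Prop}
    (h : ∀ (α : List A) a v, P α (dm a) v ↔ P' α (dm a) v) (α : List A) (u : D) :
    taD dm P α u = taD dm P' α u := by
  induction α generalizing u with
  | nil => rfl
  | cons a α ih => simp only [taD, h α a u, ih]

theorem isTaDSecure_taD_observer_iff (P Q : List A → D → D → Prop) :
    IsTaDSecure dm P (fun s a => a :: s) [] (fun u α => taD dm Q α u) ↔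
      ∀ u (α β : List A), taD dm P α u = taD dm P β u → taD dm Q α u = taD dm Q β u := by
  simp only [IsTaDSecure, runL_cons_nil]

theorem edge_of_taD_determines {P Q : List A → D → D → Prop}
    (h : ∀ u (α β : List A), taD dm P α u = taD dm P β u → taD dm Q α u = taD dm Q β u)
    {a : A} {v : D} {α : List A} (hQ : Q α (dm a) v) : P α (dm a) v := by
  by_contra hP
  have hQeq := h v (a :: α) α (by simp only [taD, hP, if_false])
  simp only [taD, hQ, if_true] at hQeq
  exact TATree.node_ne_left _ _ _ hQeq

theorem SecurityEquivalent.symm {P P' : List A → D → D → Prop}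
    (h : SecurityEquivalent dm P P') : SecurityEquivalent dm P' P :=
  fun S O step s0 obs => (h S O step s0 obs).symm

theorem edge_of_securityEquivalent {P P' : List A → D → D → Prop}
    (h : SecurityEquivalent dm P P') {a : A} {v : D} {α : List A} (hP' : P' α (dm a) v) :
    P α (dm a) v := by
  have hself : IsTaDSecure dm P' (fun s a => a :: s) [] fun u α => taD dm P' α u :=
    (isTaDSecure_taD_observer_iff dm P' P').mpr fun _ _ _ => id
  exact edge_of_taD_determines dm ((isTaDSecure_taD_observer_iff dm P P').mp
    ((h _ _ _ _ _).mpr hself)) hP'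

theorem securityEquivalent_of_active_edges_iff {P P' : List A → D → D → Prop}
    (h : ∀ (α : List A) a v, P α (dm a) v ↔ P' α (dm a) v) : SecurityEquivalent dm P P' := by
  intro S O step s0 obs
  simp only [IsTaDSecure, taD_eq_of_active_edges_iff dm h]

end

theorem statement_10_general {D A : Type} (dm : A → D) (P P' : List A → D → D → Prop) :
    (∀ (S O : Type) (step : S → A → S) (s0 : S) (obs : D → S → O),
      (∀ u (α β : List A), taD dm P α u = taD dm P β u →
          obs u (runL step s0 α) = obs u (runL step s0 β)) ↔
      (∀ u (α β : List A), taD dm P' α u = taD dm P' β u →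
          obs u (runL step s0 α) = obs u (runL step s0 β))) ↔
    (∀ u, (∃ a, dm a = u) → ∀ v (α : List A), P α u v ↔ P' α u v) := by
  constructor
  · rintro h _ ⟨a, rfl⟩ v α
    exact ⟨edge_of_securityEquivalent dm (SecurityEquivalent.symm dm h),
      edge_of_securityEquivalent dm h⟩
  · intro h
    exact securityEquivalent_of_active_edges_iff dm fun α a v => h (dm a) ⟨a, rfl⟩ v α

/-- two policies are equivalent with respect to `ta^◇`-security iff they are
identical up to inactive domains. -/
theorem statement_10 {D A : Type} (dm : A → D) (P P' : List A → D → D → Prop)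
    (hrefl : ∀ α u, P α u u) (hrefl' : ∀ α u, P' α u u) :
    (∀ (S O : Type) (step : S → A → S) (s0 : S) (obs : D → S → O),
      (∀ u (α β : List A), taD dm P α u = taD dm P β u →
          obs u (runL step s0 α) = obs u (runL step s0 β)) ↔
      (∀ u (α β : List A), taD dm P' α u = taD dm P' β u →
          obs u (runL step s0 α) = obs u (runL step s0 β))) ↔
    (∀ u, (∃ a, dm a = u) → ∀ v (α : List A), P α u v ↔ P' α u v) :=
  statement_10_general dm P P'
end

section
/- If ↣ is a static dynamic policy (α ⊨ u ↣ v iff ε ⊨ u ↣ v for all α), then for any system M the following are equivalent: M is ta^◇-secure with respect to ↣; M is ta^□-secure with respect to ↣; M is TA-secure with respect to the static relation π₁,₃(↣). -/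
open Classical

/-- The purge function `ta` for a static policy `Q`. -/
noncomputable def taS {D A : Type} (dm : A → D) (Q : D → D → Prop) :
    List A → D → TATree A
  | [], _ => TATree.eps
  | a :: α, u =>
    if Q (dm a) u then TATree.node (taS dm Q α u) (taS dm Q α (dm a)) a
    else taS dm Q α u

/-!
For a static policy every edge condition, both in `ta^◇` and in the unwinding relations, reduces
to the fixed relation `Q = π₁,₃(↣)`. Then `ta^◇` is literally the static `ta`, and the unwinding
relation of `u` is exactly the kernel of `ta_u`: equal `ta_u`-trees are connected by peeling off
leading actions that `u` cannot see (DLR) and matching the visible ones pairwise (WSC).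
-/

section StaticPolicy

variable {D A : Type} (dm : A → D) {P : List A → D → D → Prop} {Q : D → D → Prop}
  (hP : ∀ α v w, P α v w ↔ Q v w)
include hP

theorem taD_eq_taS_of_static : taD dm P = taS dm Q := by
  funext α u
  induction α generalizing u with
  | nil => rfl
  | cons a α ih => simp only [taD, taS, hP, ih]

theorem unw_cons_of_not_static {u : D} {a : A} (α : List A) (h : ¬ Q (dm a) u) :
    Unw dm P u (a :: α) α :=
  .dlr u α a ((hP α _ _).not.mpr h)

theorem taS_eq_of_unw {u : D} {α β : List A} (h : Unw dm P u α β) :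
    taS dm Q α u = taS dm Q β u := by
  induction h with
  | refl => rfl
  | symm _ ih => exact ih.symm
  | trans _ _ ih₁ ih₂ => exact ih₁.trans ih₂
  | dlr u α a h => simp only [taS, (hP α _ _).not.mp h, if_false]
  | wsc u a _ _ ih₁ ih₂ => simp only [taS, ih₁, ih₂]

theorem unw_nil_of_taS_eq_eps {u : D} {β : List A} (h : taS dm Q β u = .eps) :
    Unw dm P u [] β := by
  induction β with
  | nil => exact .refl u []
  | cons b β ih =>
    by_cases hb : Q (dm b) u
    · simp [taS, hb] at h
    · simp only [taS, hb, if_false] at h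
      exact (ih h).trans (unw_cons_of_not_static dm hP β hb).symm

theorem unw_of_taS_eq {u : D} {α β : List A} (h : taS dm Q α u = taS dm Q β u) :
    Unw dm P u α β := by
  induction α generalizing u β with
  | nil => exact unw_nil_of_taS_eq_eps dm hP h.symm
  | cons a α ih =>
    by_cases ha : Q (dm a) u
    · induction β with
      | nil => simp [taS, ha] at h
      | cons b β ihβ =>
        by_cases hb : Q (dm b) u
        · simp only [taS, ha, hb, if_true, TATree.node.injEq] at h
          obtain ⟨hu, hv, rfl⟩ := h
          exact .wsc u a (ih hu) (ih hv)
        · simp only [taS, hb, if_false] at h ihβ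
          exact (ihβ h).trans (unw_cons_of_not_static dm hP β hb).symm
    · simp only [taS, ha, if_false] at h
      exact (unw_cons_of_not_static dm hP α ha).trans (ih h)

theorem unw_iff_taS_eq {u : D} {α β : List A} :
    Unw dm P u α β ↔ taS dm Q α u = taS dm Q β u :=
  ⟨taS_eq_of_unw dm hP, unw_of_taS_eq dm hP⟩

end StaticPolicy

theorem statement_11_general {D A S O : Type} (dm : A → D) (P : List A → D → D → Prop)
    (hstatic : ∀ (α : List A) u v, P α u v ↔ P [] u v)
    (step : S → A → S) (s0 : S) (obs : D → S → O) :
    ((∀ u (α β : List A), taD dm P α u = taD dm P β u →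
        obs u (runL step s0 α) = obs u (runL step s0 β)) ↔
      (∀ u (α β : List A), Unw dm P u α β →
        obs u (runL step s0 α) = obs u (runL step s0 β))) ∧
    ((∀ u (α β : List A), Unw dm P u α β →
        obs u (runL step s0 α) = obs u (runL step s0 β)) ↔
      (∀ u (α β : List A),
        taS dm (fun v w => P [] v w) α u = taS dm (fun v w => P [] v w) β u →
        obs u (runL step s0 α) = obs u (runL step s0 β))) := by
  simp only [taD_eq_taS_of_static dm hstatic, unw_iff_taS_eq dm hstatic, and_self]

/-- for a static policy, `ta^◇`-security, `ta^□`-security and TA-security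
with respect to the projected static relation are all equivalent. -/
theorem statement_11 {D A S O : Type} (dm : A → D) (P : List A → D → D → Prop)
    (hrefl : ∀ α u, P α u u)
    (hstatic : ∀ (α : List A) u v, P α u v ↔ P [] u v)
    (step : S → A → S) (s0 : S) (obs : D → S → O) :
    ((∀ u (α β : List A), taD dm P α u = taD dm P β u →
        obs u (runL step s0 α) = obs u (runL step s0 β)) ↔
      (∀ u (α β : List A), Unw dm P u α β →
        obs u (runL step s0 α) = obs u (runL step s0 β))) ∧
    ((∀ u (α β : List A), Unw dm P u α β →
        obs u (runL step s0 α) = obs u (runL step s0 β)) ↔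
      (∀ u (α β : List A),
        taS dm (fun v w => P [] v w) α u = taS dm (fun v w => P [] v w) β u →
        obs u (runL step s0 α) = obs u (runL step s0 β))) :=
  statement_11_general dm P hstatic step s0 obs
end

section
/- If a dynamic policy ↣ is globally known—i.e., there is a policy-authority domain P with (GK1) α ⊨ P ↣ u for all α, u, and (GK2) for all α, β, u, v, α|P = β|P implies (α ⊨ u ↣ v iff β ⊨ u ↣ v)—then ↣ is local. In particular, α ∼ᵘⁿʷ_u β implies α|P = β|P for all u. -/
open Classical

/-- DLR only removes an action `a` with `¬ P α (dm a) u`, which GK1 rules out when `dm a = p`. -/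
theorem Unw.filter_dm_eq {D A : Type} [DecidableEq D] {dm : A → D} {P : List A → D → D → Prop}
    {p : D} (hGK1 : ∀ (α : List A) u, P α p u) {u : D} {α β : List A} (h : Unw dm P u α β) :
    α.filter (fun a => decide (dm a = p)) = β.filter (fun a => decide (dm a = p)) := by
  induction h with
  | refl => rfl
  | symm _ ih => exact ih.symm
  | trans _ _ ih₁ ih₂ => exact ih₁.trans ih₂
  | dlr u α a hnot =>
    have hne : dm a ≠ p := fun h => hnot (h ▸ hGK1 α u)
    simp [hne]
  | wsc u a _ _ ih _ => simp [List.filter_cons, ih]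

theorem statement_12_general {D A : Type} [DecidableEq D] (dm : A → D)
    (P : List A → D → D → Prop) (p : D)
    (hGK1 : ∀ (α : List A) u, P α p u)
    (hGK2 : ∀ (α β : List A) u v,
      α.filter (fun a => decide (dm a = p)) = β.filter (fun a => decide (dm a = p)) →
      (P α u v ↔ P β u v)) :
    (∀ u (α β : List A), Unw dm P u α β →
        α.filter (fun a => decide (dm a = p)) = β.filter (fun a => decide (dm a = p))) ∧
    (∀ u v (α β : List A), Unw dm P u α β → Unw dm P v α β → (P α u v ↔ P β u v)) :=
  ⟨fun _ _ _ h => h.filter_dm_eq hGK1,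
    fun u v α β h _ => hGK2 α β u v (h.filter_dm_eq hGK1)⟩

/-- a globally known policy is local; in particular unwinding-equivalent
traces have the same subsequence of policy-authority actions. -/
theorem statement_12 {D A : Type} [DecidableEq D] (dm : A → D)
    (P : List A → D → D → Prop) (p : D)
    (hrefl : ∀ α u, P α u u)
    (hGK1 : ∀ (α : List A) u, P α p u)
    (hGK2 : ∀ (α β : List A) u v,
      α.filter (fun a => decide (dm a = p)) = β.filter (fun a => decide (dm a = p)) →
      (P α u v ↔ P β u v)) :
    (∀ u (α β : List A), Unw dm P u α β →
        α.filter (fun a => decide (dm a = p)) = β.filter (fun a => decide (dm a = p))) ∧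
    (∀ u v (α β : List A), Unw dm P u α β → Unw dm P v α β → (P α u v ↔ P β u v)) :=
  statement_12_general dm P p hGK1 hGK2
end

section
/- If ↣ ≤ ↣' and ↣ is local, then any system M that is ta^◇-secure with respect to ↣ is ta^◇-secure with respect to ↣'. -/
/-! It suffices that `ta^◇` for `P'` identifies fewer traces than `ta^◇` for `P`. By induction
on both traces: an action that `P'` purges for `u` is purged by `P` as well, and where both
`P'`-trees record an action, the recorded subtrees agree for `P` by induction, so locality of
`P` makes the `P`-edge hold on both sides or on neither. -/

open Classical

namespace taD

variable {D A : Type} {dm : A → D} {P P' : List A → D → D → Prop}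

def IsLocal (dm : A → D) (P : List A → D → D → Prop) : Prop :=
  ∀ u v (α β : List A), taD dm P α u = taD dm P β u →
    taD dm P α v = taD dm P β v → (P α u v ↔ P β u v)

theorem cons_of_pos {α : List A} {a : A} {u : D} (h : P α (dm a) u) :
    taD dm P (a :: α) u = .node (taD dm P α u) (taD dm P α (dm a)) a := by
  rw [taD, if_pos h]

theorem cons_of_neg {α : List A} {a : A} {u : D} (h : ¬P α (dm a) u) :
    taD dm P (a :: α) u = taD dm P α u := by
  rw [taD, if_neg h]

theorem cons_ne_eps_of_pos {α : List A} {a : A} {u : D} (h : P α (dm a) u) :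
    taD dm P (a :: α) u ≠ .eps := by
  simp [cons_of_pos h]

theorem eps_of_le (hle : ∀ α u v, P α u v → P' α u v) {α : List A} {u : D}
    (h : taD dm P' α u = .eps) : taD dm P α u = .eps := by
  induction α with
  | nil => rfl
  | cons a α ih =>
    have ha : ¬P' α (dm a) u := fun ha => cons_ne_eps_of_pos ha h
    rw [cons_of_neg fun h => ha (hle _ _ _ h)]
    exact ih (by rwa [cons_of_neg ha] at h)

theorem eq_of_le_of_isLocal (hle : ∀ α u v, P α u v → P' α u v) (hloc : IsLocal dm P)
    {α β : List A} {u : D} (h : taD dm P' α u = taD dm P' β u) :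
    taD dm P α u = taD dm P β u := by
  induction α generalizing β u with
  | nil => exact (eps_of_le hle h.symm).symm
  | cons a α ihα =>
    induction β generalizing u with
    | nil => exact eps_of_le hle h
    | cons b β ihβ =>
      by_cases ha : P' α (dm a) u
      · by_cases hb : P' β (dm b) u
        · rw [cons_of_pos ha, cons_of_pos hb] at h
          obtain ⟨hu, hdm, rfl⟩ := TATree.node.inj h
          have hu := ihα hu
          have hdm := ihα hdm
          by_cases hp : P α (dm a) u
          · rw [cons_of_pos hp, cons_of_pos ((hloc _ _ _ _ hdm hu).mp hp), hu, hdm]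
          · rw [cons_of_neg hp, cons_of_neg (mt (hloc _ _ _ _ hdm hu).mpr hp), hu]
        · rw [cons_of_neg hb] at h
          rw [cons_of_neg fun h => hb (hle _ _ _ h)]
          exact ihβ h
      · rw [cons_of_neg ha] at h
        rw [cons_of_neg fun h => ha (hle _ _ _ h)]
        exact ihα h

end taD

theorem statement_14_general {D A S O : Type} (dm : A → D) (P P' : List A → D → D → Prop)
    (hle : ∀ (α : List A) u v, P α u v → P' α u v)
    (hloc : ∀ u v (α β : List A), taD dm P α u = taD dm P β u →
        taD dm P α v = taD dm P β v → (P α u v ↔ P β u v))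
    (step : S → A → S) (s0 : S) (obs : D → S → O)
    (hsec : ∀ u (α β : List A), taD dm P α u = taD dm P β u →
        obs u (runL step s0 α) = obs u (runL step s0 β)) :
    ∀ u (α β : List A), taD dm P' α u = taD dm P' β u →
        obs u (runL step s0 α) = obs u (runL step s0 β) :=
  fun u α β h => hsec u α β (taD.eq_of_le_of_isLocal hle hloc h)

/-- if `P ≤ P'` and `P` is local, `ta^◇`-security with respect to `P`
implies `ta^◇`-security with respect to `P'`. -/
theorem statement_14 {D A S O : Type} (dm : A → D) (P P' : List A → D → D → Prop)
    (hrefl : ∀ α u, P α u u)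
    (hle : ∀ (α : List A) u v, P α u v → P' α u v)
    (hloc : ∀ u v (α β : List A), taD dm P α u = taD dm P β u →
        taD dm P α v = taD dm P β v → (P α u v ↔ P β u v))
    (step : S → A → S) (s0 : S) (obs : D → S → O)
    (hsec : ∀ u (α β : List A), taD dm P α u = taD dm P β u →
        obs u (runL step s0 α) = obs u (runL step s0 β)) :
    ∀ u (α β : List A), taD dm P' α u = taD dm P' β u →
        obs u (runL step s0 α) = obs u (runL step s0 β) :=
  statement_14_general dm P P' hle hloc step s0 obs hsec
end

section
/- Access control soundness: if a system M with structured state satisfies the dynamic reference monitor conditions DRM-1 through DRM-6 with respect to a dynamic policy ↣, then M is ta^◇-secure with respect to ↣; if M additionally satisfies the stronger condition DRM-5' (s ≈ᵃᶜ_u t and s ≈ᵃᶜ_v t imply observe(u,s) ∩ alter(v,s) = observe(u,t) ∩ alter(v,t)), then M is ta^□-secure with respect to ↣. -/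
/-!
Both parts reduce, through DRM-1, to showing that the two runs are `≈ᵃᶜ_u`-equivalent.
An action `a` without an edge `dom(a) ↣ u` alters nothing that `u` observes (DRM-6), so by DRM-3
it changes neither the contents `u` observes nor, through `oset u`, the set `observe u` itself.
An action applied to two states that agree for `u` and for `dom(a)` keeps them agreeing for `u`:
an observed object altered in both states gets equal contents by DRM-2, one altered in neither
keeps its contents, DRM-5 (resp. DRM-5') excludes an object altered in only one of them, and
newly observed objects were observed by `dom(a)` (DRM-4). Induction on the `ta^◇` trees, resp. on
the unwinding relations, then gives the two security properties.
-/

open Classical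

section
variable {D A S Obj Val : Type}

/-- `s ≈ᵃᶜ_u t`. -/
def AcEquiv (contents : Obj → S → Val) (observe : D → S → Set Obj) (u : D) (s t : S) : Prop :=
  ∀ o ∈ observe u s, contents o s = contents o t

structure ObserveRecorded (contents : Obj → S → Val) (observe : D → S → Set Obj)
    (oset : D → Obj) : Prop where
  oset_mem : ∀ u s, oset u ∈ observe u s
  observe_eq : ∀ u s t, contents (oset u) s = contents (oset u) t → observe u s = observe u t

/-- The reference monitor conditions DRM-2, DRM-3 and DRM-4. -/
structure IsReferenceMonitor (dm : A → D) (step : S → A → S) (contents : Obj → S → Val)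
    (observe alter : D → S → Set Obj) : Prop where
  contents_step_eq : ∀ (a : A) (s t : S) (o : Obj), o ∈ alter (dm a) s → o ∈ alter (dm a) t →
    AcEquiv contents observe (dm a) s t → contents o s = contents o t →
      contents o (step s a) = contents o (step t a)
  mem_alter_of_contents_step_ne : ∀ (a : A) (s : S) (o : Obj),
    contents o (step s a) ≠ contents o s → o ∈ alter (dm a) s
  observe_step_diff_subset : ∀ u (s : S) (a : A),
    observe u (step s a) \ observe u s ⊆ observe (dm a) s

namespace AcEquiv

variable {contents : Obj → S → Val} {observe : D → S → Set Obj} {oset : D → Obj}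
  {u : D} {s t r : S}

theorem refl (u : D) (s : S) : AcEquiv contents observe u s s := fun _ _ => rfl

theorem observe_eq (ho : ObserveRecorded contents observe oset)
    (h : AcEquiv contents observe u s t) : observe u s = observe u t :=
  ho.observe_eq u s t (h _ (ho.oset_mem u s))

theorem symm (ho : ObserveRecorded contents observe oset) (h : AcEquiv contents observe u s t) :
    AcEquiv contents observe u t s := fun o hot =>
  (h o (h.observe_eq ho ▸ hot)).symm

theorem trans (ho : ObserveRecorded contents observe oset) (h₁ : AcEquiv contents observe u s t)
    (h₂ : AcEquiv contents observe u t r) : AcEquiv contents observe u s r := fun o hos =>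
  (h₁ o hos).trans (h₂ o (h₁.observe_eq ho ▸ hos))

theorem of_changes_disjoint (ho : ObserveRecorded contents observe oset) {X : Set Obj}
    (hX : ∀ o, contents o t ≠ contents o s → o ∈ X) (hdisj : Disjoint X (observe u s)) :
    AcEquiv contents observe u t s := by
  have hobs : observe u t = observe u s := by
    by_contra hne
    exact Set.disjoint_left.mp hdisj (hX _ fun h => hne (ho.observe_eq u t s h))
      (ho.oset_mem u s)
  intro o hot
  by_contra hne
  exact Set.disjoint_left.mp hdisj (hX o hne) (hobs ▸ hot)

/-- `X` and `Y` play the role of `alter (dm a) s` and `alter (dm a) t`. -/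
theorem contents_eq_of_inter_eq (ho : ObserveRecorded contents observe oset) {s' t' : S}
    {X Y : Set Obj} (hXY : ∀ o ∈ X, o ∈ Y → contents o s = contents o t →
      contents o s' = contents o t')
    (hX : ∀ o, contents o s' ≠ contents o s → o ∈ X)
    (hY : ∀ o, contents o t' ≠ contents o t → o ∈ Y)
    (h : AcEquiv contents observe u s t) (hI : observe u s ∩ X = observe u t ∩ Y)
    {o : Obj} (hos : o ∈ observe u s) : contents o s' = contents o t' := by
  by_cases hoX : o ∈ X
  · have hoY : o ∈ observe u t ∩ Y := hI ▸ ⟨hos, hoX⟩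
    exact hXY o hoX hoY.2 (h o hos)
  · have hoY : o ∉ Y := fun hoY =>
      hoX (show o ∈ observe u s ∩ X from hI ▸ ⟨h.observe_eq ho ▸ hos, hoY⟩).2
    calc contents o s' = contents o s := not_not.mp (mt (hX o) hoX)
      _ = contents o t := h o hos
      _ = contents o t' := (not_not.mp (mt (hY o) hoY)).symm

end AcEquiv

namespace IsReferenceMonitor

variable {dm : A → D} {step : S → A → S} {contents : Obj → S → Val}
  {observe alter : D → S → Set Obj} {oset : D → Obj} {u : D} {s t : S} {a : A}

theorem acEquiv_step_of_disjoint (hM : IsReferenceMonitor dm step contents observe alter)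
    (ho : ObserveRecorded contents observe oset) (h : Disjoint (alter (dm a) s) (observe u s)) :
    AcEquiv contents observe u (step s a) s :=
  AcEquiv.of_changes_disjoint ho (hM.mem_alter_of_contents_step_ne a s) h

theorem acEquiv_step_step (hM : IsReferenceMonitor dm step contents observe alter)
    (ho : ObserveRecorded contents observe oset)
    (hu : AcEquiv contents observe u s t) (ha : AcEquiv contents observe (dm a) s t)
    (hIu : observe u s ∩ alter (dm a) s = observe u t ∩ alter (dm a) t)
    (hIa : observe (dm a) s ∩ alter (dm a) s = observe (dm a) t ∩ alter (dm a) t) :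
    AcEquiv contents observe u (step s a) (step t a) := by
  have hstep : ∀ w, AcEquiv contents observe w s t →
      observe w s ∩ alter (dm a) s = observe w t ∩ alter (dm a) t →
      ∀ o ∈ observe w s, contents o (step s a) = contents o (step t a) := fun _ hw hI _ hos =>
    hw.contents_eq_of_inter_eq ho (fun o hs ht => hM.contents_step_eq a s t o hs ht ha)
      (hM.mem_alter_of_contents_step_ne a s) (hM.mem_alter_of_contents_step_ne a t) hI hos
  intro o hos'
  by_cases hos : o ∈ observe u s
  · exact hstep u hu hIu o hos
  · exact hstep (dm a) ha hIa o (hM.observe_step_diff_subset u s a ⟨hos', hos⟩)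

end IsReferenceMonitor

variable {dm : A → D} {P : List A → D → D → Prop} {step : S → A → S} {s0 : S}
  {contents : Obj → S → Val} {observe alter : D → S → Set Obj} {oset : D → Obj}

theorem acEquiv_runL_cons_of_not (hM : IsReferenceMonitor dm step contents observe alter)
    (ho : ObserveRecorded contents observe oset)
    (hdrm6 : ∀ u v (α : List A),
      (alter u (runL step s0 α) ∩ observe v (runL step s0 α)).Nonempty → P α u v)
    {u : D} {a : A} {α : List A} (h : ¬ P α (dm a) u) :
    AcEquiv contents observe u (runL step s0 (a :: α)) (runL step s0 α) :=
  hM.acEquiv_step_of_disjoint ho <| by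
    by_contra hd
    exact h (hdrm6 _ _ _ (Set.not_disjoint_iff_nonempty_inter.mp hd))

theorem acEquiv_of_taD_eq (hrefl : ∀ α u, P α u u)
    (hM : IsReferenceMonitor dm step contents observe alter)
    (ho : ObserveRecorded contents observe oset)
    (hdrm5 : ∀ u v (α β : List A), P α v u → P β v u →
      AcEquiv contents observe u (runL step s0 α) (runL step s0 β) →
      AcEquiv contents observe v (runL step s0 α) (runL step s0 β) →
      observe u (runL step s0 α) ∩ alter v (runL step s0 α) =
        observe u (runL step s0 β) ∩ alter v (runL step s0 β))
    (hdrm6 : ∀ u v (α : List A),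
      (alter u (runL step s0 α) ∩ observe v (runL step s0 α)).Nonempty → P α u v) :
    ∀ (α β : List A) (u : D), taD dm P α u = taD dm P β u →
      AcEquiv contents observe u (runL step s0 α) (runL step s0 β)
  | [], [], u, _ => .refl u _
  | [], b :: β, u, h => by
    have hb : ¬ P β (dm b) u := fun hb => by simp [taD, hb] at h
    simp only [taD, if_neg hb] at h
    exact (acEquiv_of_taD_eq hrefl hM ho hdrm5 hdrm6 [] β u h).trans ho
      ((acEquiv_runL_cons_of_not hM ho hdrm6 hb).symm ho)
  | a :: α, β, u, h => by
    by_cases ha : P α (dm a) u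
    · cases β with
      | nil => simp [taD, ha] at h
      | cons b β =>
        by_cases hb : P β (dm b) u
        · simp only [taD, if_pos ha, if_pos hb, TATree.node.injEq] at h
          obtain ⟨hu, hau, rfl⟩ := h
          have eu := acEquiv_of_taD_eq hrefl hM ho hdrm5 hdrm6 α β u hu
          have ea := acEquiv_of_taD_eq hrefl hM ho hdrm5 hdrm6 α β (dm a) hau
          exact hM.acEquiv_step_step ho eu ea (hdrm5 _ _ _ _ ha hb eu ea)
            (hdrm5 _ _ _ _ (hrefl _ _) (hrefl _ _) ea ea)
        · simp only [taD, if_neg hb] at h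
          exact (acEquiv_of_taD_eq hrefl hM ho hdrm5 hdrm6 (a :: α) β u h).trans ho
            ((acEquiv_runL_cons_of_not hM ho hdrm6 hb).symm ho)
    · simp only [taD, if_neg ha] at h
      exact (acEquiv_runL_cons_of_not hM ho hdrm6 ha).trans ho
        (acEquiv_of_taD_eq hrefl hM ho hdrm5 hdrm6 α β u h)

theorem acEquiv_of_unw (hM : IsReferenceMonitor dm step contents observe alter)
    (ho : ObserveRecorded contents observe oset)
    (hdrm5' : ∀ u v (s t : S), AcEquiv contents observe u s t → AcEquiv contents observe v s t →
      observe u s ∩ alter v s = observe u t ∩ alter v t)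
    (hdrm6 : ∀ u v (α : List A),
      (alter u (runL step s0 α) ∩ observe v (runL step s0 α)).Nonempty → P α u v)
    {u : D} {α β : List A} (h : Unw dm P u α β) :
    AcEquiv contents observe u (runL step s0 α) (runL step s0 β) := by
  induction h with
  | refl u α => exact .refl u _
  | symm _ ih => exact ih.symm ho
  | trans _ _ ih₁ ih₂ => exact ih₁.trans ho ih₂
  | dlr u α a h => exact acEquiv_runL_cons_of_not hM ho hdrm6 h
  | wsc u a _ _ ihu iha =>
    exact hM.acEquiv_step_step ho ihu iha (hdrm5' _ _ _ _ ihu iha) (hdrm5' _ _ _ _ iha iha)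

end

/-- access control soundness: the dynamic reference monitor conditions
DRM-1 … DRM-6 imply `ta^◇`-security, and with the stronger DRM-5' also `ta^□`-security. -/
theorem statement_18 {D A S Out Obj Val : Type} (dm : A → D) (P : List A → D → D → Prop)
    (hrefl : ∀ α u, P α u u)
    (step : S → A → S) (s0 : S) (obs : D → S → Out)
    (contents : Obj → S → Val) (observe alter : D → S → Set Obj)
    (oset : D → Obj) (osetVal : Set Obj → Val)
    (hinj : Function.Injective osetVal)
    (hosetContents : ∀ u s, contents (oset u) s = osetVal (observe u s))
    (hosetMem : ∀ u s, oset u ∈ observe u s)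
    (drm1 : ∀ u (s t : S), (∀ o ∈ observe u s, contents o s = contents o t) →
        obs u s = obs u t)
    (drm2 : ∀ (a : A) (s t : S) (o : Obj), o ∈ alter (dm a) s → o ∈ alter (dm a) t →
        (∀ o' ∈ observe (dm a) s, contents o' s = contents o' t) →
        contents o s = contents o t → contents o (step s a) = contents o (step t a))
    (drm3 : ∀ (a : A) (s : S) (o : Obj), contents o (step s a) ≠ contents o s →
        o ∈ alter (dm a) s)
    (drm4 : ∀ u (s : S) (a : A), observe u (step s a) \ observe u s ⊆ observe (dm a) s)
    (drm5 : ∀ u v (α β : List A), P α v u → P β v u →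
        (∀ o ∈ observe u (runL step s0 α), contents o (runL step s0 α) = contents o (runL step s0 β)) →
        (∀ o ∈ observe v (runL step s0 α), contents o (runL step s0 α) = contents o (runL step s0 β)) →
        observe u (runL step s0 α) ∩ alter v (runL step s0 α) =
          observe u (runL step s0 β) ∩ alter v (runL step s0 β))
    (drm6 : ∀ u v (α : List A),
        (alter u (runL step s0 α) ∩ observe v (runL step s0 α)).Nonempty → P α u v) :
    (∀ u (α β : List A), taD dm P α u = taD dm P β u →
        obs u (runL step s0 α) = obs u (runL step s0 β)) ∧
    ((∀ u v (s t : S), (∀ o ∈ observe u s, contents o s = contents o t) →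
        (∀ o ∈ observe v s, contents o s = contents o t) →
        observe u s ∩ alter v s = observe u t ∩ alter v t) →
      ∀ u (α β : List A), Unw dm P u α β →
        obs u (runL step s0 α) = obs u (runL step s0 β)) := by
  have ho : ObserveRecorded contents observe oset :=
    ⟨hosetMem, fun u s t h => hinj (by rwa [hosetContents, hosetContents] at h)⟩
  have hM : IsReferenceMonitor dm step contents observe alter := ⟨drm2, drm3, drm4⟩
  exact ⟨fun u α β h => drm1 u _ _ (acEquiv_of_taD_eq hrefl hM ho drm5 drm6 α β u h),
    fun drm5' u α β h => drm1 u _ _ (acEquiv_of_unw hM ho drm5' drm6 h)⟩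
end
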